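/- Single-relay MSE comparison (Theorem 4.1): Let K ≥ 1 devices have nonzero channels h_k (to the AP) and g_k (to the relay), the relay have nonzero channel f to the AP, with powers P₀, P_r > 0 and noise σ² > 0, and equal weights ρ = 1/K. Define SNR_k = P₀|h_k|²/σ², SNR_{k,relay} = P₀|g_k|²/σ², SNR_relay-AP = P_r|f|²/σ², and δ = (min_k SNR_k)/(min_k SNR_{k,relay}). If δ ≤ 1 and SNR_relay-AP ≥ (K·min_k SNR_k + δ)/(1 + √(2 − 2δ))², then there exists a feasible point (a_{k,1}, a_{k,2}, b, c₁=0, c₂) of the single-relay problem — satisfying |a_{k,1}|² ≤ P₀, |a_{k,2}|² ≤ P₀, and |b|²(∑_k |g_k|²|a_{k,1}|² + σ²) ≤ P_r — whose MSE objective ∑_k |c₁ h_k a_{k,1} + c₂ f b g_k a_{k,1} + c₂ h_k a_{k,2} − ρ|² + (|c₁|² + |c₂|² + |c₂|²|f|²|b|²)σ² is at most (ρ²σ²/(2P₀)) max_k 1/|h_k|², the minimal MSE of the no-relay scheme. -/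

import Mathlib

/-!
Let `H` and `G` be the weakest device–AP and device–relay channel gains, so that `δ = H / G`.
Every device inverts both of its channels at the power of its weakest counterpart,
`a₁ = √(P₀G) / g_k`, `a₂ = √(P₀H) / h_k`, and the receive scalar `c₂` and the relay gain `b` are
tuned so that the direct path delivers a share `α ρ` and the relayed path a share `β ρ` of the
target, `α + β = 1`. All aggregation errors then vanish and only the noise term
`ρ²σ²/P₀ (α²/H + β²/G) = ρ²σ²/(P₀H) (α² + β²δ)` remains. With `s = √(2 - 2δ)`, the split
`α = (1+s)/(2+s)`, `β = 1/(2+s)` gives `α² + β²δ = 1/2`, half the no-relay MSE, and the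
hypothesis on `SNR_relay-AP` is exactly the relay power budget of this split.
-/

open Finset

lemma Finset.inf'_mul_div_const {ι : Type*} {s : Finset ι} (hs : s.Nonempty) (u : ι → ℝ)
    {a c : ℝ} (ha : 0 ≤ a) (hc : 0 ≤ c) :
    s.inf' hs (fun i => a * u i / c) = a * s.inf' hs u / c :=
  (apply_inf'_eq_inf'_comp hs (fun x => a * x / c)
    fun _ _ => Monotone.map_min (f := fun x => a * x / c) fun _ _ hxy =>
      div_le_div_of_nonneg_right (mul_le_mul_of_nonneg_left hxy ha) hc).symm

lemma Finset.sup'_one_div_eq_one_div_inf' {ι : Type*} {s : Finset ι} (hs : s.Nonempty)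
    {u : ι → ℝ} (hu : ∀ i ∈ s, 0 < u i) :
    s.sup' hs (fun i => 1 / u i) = 1 / s.inf' hs u := by
  obtain ⟨i, hi, hmin⟩ := exists_mem_eq_inf' hs u
  rw [hmin]
  refine le_antisymm (sup'_le _ _ fun j hj => ?_) (le_sup' (fun i => 1 / u i) hi)
  exact one_div_le_one_div_of_le (hu i hi) (hmin ▸ inf'_le u hj)

lemma Complex.norm_sq_sqrt_div (c : ℝ) (hc : 0 ≤ c) (z : ℂ) :
    ‖(√c : ℂ) / z‖ ^ 2 = c / ‖z‖ ^ 2 := by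
  rw [norm_div, div_pow, Complex.norm_real, Real.norm_eq_abs, sq_abs, Real.sq_sqrt hc]

lemma ne_zero_of_pos_le_norm_sq {z : ℂ} {m : ℝ} (hm : 0 < m) (hz : m ≤ ‖z‖ ^ 2) : z ≠ 0 := by
  rintro rfl
  simp only [norm_zero] at hz
  linarith

theorem exists_relay_zeroForcing {ι : Type*} [Fintype ι] (h g : ι → ℂ) {f : ℂ} (hf : f ≠ 0)
    {P0 H G : ℝ} (hP0 : 0 < P0) (hH : 0 < H) (hG : 0 < G)
    (hHh : ∀ k, H ≤ ‖h k‖ ^ 2) (hGg : ∀ k, G ≤ ‖g k‖ ^ 2) (σ2 : ℝ) {ρ α β : ℝ}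
    (hαρ : α * ρ ≠ 0) (hαβ : α + β = 1) :
    ∃ (a1 a2 : ι → ℂ) (b c2 : ℂ),
      (∀ k, ‖a1 k‖ ^ 2 ≤ P0) ∧ (∀ k, ‖a2 k‖ ^ 2 ≤ P0) ∧
      ‖b‖ ^ 2 * (∑ k, ‖g k‖ ^ 2 * ‖a1 k‖ ^ 2 + σ2)
        = (β / α) ^ 2 * (H / G) * (Fintype.card ι * (P0 * G) + σ2) / ‖f‖ ^ 2 ∧
      (∀ k, c2 * f * b * g k * a1 k + c2 * h k * a2 k = ρ) ∧
      (‖c2‖ ^ 2 + ‖c2‖ ^ 2 * ‖f‖ ^ 2 * ‖b‖ ^ 2) * σ2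
        = ρ ^ 2 * σ2 / P0 * (α ^ 2 / H + β ^ 2 / G) := by
  have hPH : 0 < P0 * H := mul_pos hP0 hH
  have hPG : 0 < P0 * G := mul_pos hP0 hG
  have hα : α ≠ 0 := left_ne_zero_of_mul hαρ
  have hρ : ρ ≠ 0 := right_ne_zero_of_mul hαρ
  set u : ℝ := α * ρ / √(P0 * H) with hu_def
  set v : ℝ := β * ρ / √(P0 * G) with hv_def
  have hu : u ≠ 0 := div_ne_zero hαρ (Real.sqrt_pos.2 hPH).ne'
  have hu2 : u ^ 2 = α ^ 2 * ρ ^ 2 / (P0 * H) := by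
    rw [hu_def, div_pow, mul_pow, Real.sq_sqrt hPH.le]
  have hv2 : v ^ 2 = β ^ 2 * ρ ^ 2 / (P0 * G) := by
    rw [hv_def, div_pow, mul_pow, Real.sq_sqrt hPG.le]
  have hfn : ‖f‖ ≠ 0 := norm_ne_zero_iff.2 hf
  have hb : ‖((v / u : ℝ) : ℂ) / f‖ ^ 2 = (β / α) ^ 2 * (H / G) / ‖f‖ ^ 2 := by
    rw [norm_div, div_pow, Complex.norm_real, Real.norm_eq_abs, sq_abs, div_pow, hu2, hv2]
    field_simp
  have ha1 : ∀ k, ‖(√(P0 * G) : ℂ) / g k‖ ^ 2 = P0 * G / ‖g k‖ ^ 2 :=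
    fun k => Complex.norm_sq_sqrt_div _ hPG.le _
  have hg0 : ∀ k, 0 < ‖g k‖ ^ 2 := fun k => hG.trans_le (hGg k)
  refine ⟨fun k => (√(P0 * G) : ℂ) / g k, fun k => (√(P0 * H) : ℂ) / h k,
    ((v / u : ℝ) : ℂ) / f, u, fun k => ?_, fun k => ?_, ?_, fun k => ?_, ?_⟩
  · rw [ha1, div_le_iff₀ (hg0 k)]
    exact mul_le_mul_of_nonneg_left (hGg k) hP0.le
  · rw [Complex.norm_sq_sqrt_div _ hPH.le, div_le_iff₀ (hH.trans_le (hHh k))]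
    exact mul_le_mul_of_nonneg_left (hHh k) hP0.le
  · simp only [ha1, mul_div_cancel₀ _ (hg0 _).ne', sum_const, card_univ, nsmul_eq_mul, hb]
    ring
  · have hgk := ne_zero_of_pos_le_norm_sq hG (hGg k)
    have hhk := ne_zero_of_pos_le_norm_sq hH (hHh k)
    have hsG : √(P0 * G) ≠ 0 := (Real.sqrt_pos.2 hPG).ne'
    have hsH : √(P0 * H) ≠ 0 := (Real.sqrt_pos.2 hPH).ne'
    have hu' : (u : ℂ) ≠ 0 := Complex.ofReal_ne_zero.2 hu
    calc (u : ℂ) * f * (((v / u : ℝ) : ℂ) / f) * g k * ((√(P0 * G) : ℂ) / g k)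
          + u * h k * ((√(P0 * H) : ℂ) / h k)
        = ((v * √(P0 * G) + u * √(P0 * H) : ℝ) : ℂ) := by push_cast; field_simp
      _ = ρ := by
        congr 1
        rw [hu_def, hv_def, div_mul_cancel₀ _ hsG, div_mul_cancel₀ _ hsH]
        linear_combination ρ * hαβ
  · rw [hb, Complex.norm_real, Real.norm_eq_abs, sq_abs, hu2]
    field_simp

lemma exists_weights_sq_add_sq_mul_eq_half {δ : ℝ} (hδ : δ ≤ 1) :
    ∃ α β : ℝ, 0 < α ∧ α + β = 1 ∧ α ^ 2 + β ^ 2 * δ = 1 / 2 ∧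
      (β / α) ^ 2 = 1 / (1 + √(2 - 2 * δ)) ^ 2 := by
  set s := √(2 - 2 * δ)
  have hs : 0 ≤ s := Real.sqrt_nonneg _
  have hs2 : s ^ 2 = 2 - 2 * δ := Real.sq_sqrt (by linarith)
  refine ⟨(1 + s) / (2 + s), 1 / (2 + s), by positivity, by field_simp; ring, ?_, ?_⟩
  · field_simp
    linear_combination hs2
  · field_simp

theorem stmt_12_general (K : ℕ) (hK : 1 ≤ K) (P0 Pr σ2 : ℝ) (hP0 : 0 < P0)
    (hσ : 0 < σ2) (h g : Fin K → ℂ) (hh : ∀ k, h k ≠ 0) (hg : ∀ k, g k ≠ 0)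
    (f : ℂ) (hf : f ≠ 0) :
    let ne : (Finset.univ : Finset (Fin K)).Nonempty := Finset.univ_nonempty_iff.mpr ⟨⟨0, hK⟩⟩
    let ρ : ℝ := 1 / K
    let minSNR : ℝ := Finset.univ.inf' ne (fun k => P0 * ‖h k‖ ^ 2 / σ2)
    let minSNRrelay : ℝ := Finset.univ.inf' ne (fun k => P0 * ‖g k‖ ^ 2 / σ2)
    let SNRrAP : ℝ := Pr * ‖f‖ ^ 2 / σ2
    let δ : ℝ := minSNR / minSNRrelay
    δ ≤ 1 →
    SNRrAP ≥ (K * minSNR + δ) / (1 + Real.sqrt (2 - 2 * δ)) ^ 2 →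
    ∃ (a1 a2 : Fin K → ℂ) (b c1 c2 : ℂ),
      c1 = 0 ∧
      (∀ k, ‖a1 k‖ ^ 2 ≤ P0) ∧
      (∀ k, ‖a2 k‖ ^ 2 ≤ P0) ∧
      ‖b‖ ^ 2 * (∑ k, ‖g k‖ ^ 2 * ‖a1 k‖ ^ 2 + σ2) ≤ Pr ∧
      ∑ k, ‖c1 * h k * a1 k + c2 * f * b * g k * a1 k + c2 * h k * a2 k - (ρ : ℂ)‖ ^ 2
        + (‖c1‖ ^ 2 + ‖c2‖ ^ 2 + ‖c2‖ ^ 2 * ‖f‖ ^ 2 * ‖b‖ ^ 2) * σ2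
        ≤ ρ ^ 2 * σ2 / (2 * P0) * Finset.univ.sup' ne (fun k => 1 / ‖h k‖ ^ 2) := by
  intro ne ρ minSNR minSNRrelay SNRrAP δ hδ hSNR
  set H := univ.inf' ne (fun k => ‖h k‖ ^ 2)
  set G := univ.inf' ne (fun k => ‖g k‖ ^ 2)
  have hH : 0 < H := (lt_inf'_iff ne).2 fun k _ => pow_pos (norm_pos_iff.2 (hh k)) 2
  have hG : 0 < G := (lt_inf'_iff ne).2 fun k _ => pow_pos (norm_pos_iff.2 (hg k)) 2
  have hminSNR : minSNR = P0 * H / σ2 := inf'_mul_div_const ne _ hP0.le hσ.le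
  have hminSNRrelay : minSNRrelay = P0 * G / σ2 := inf'_mul_div_const ne _ hP0.le hσ.le
  have hδHG : δ = H / G := by
    rw [show δ = minSNR / minSNRrelay from rfl, hminSNR, hminSNRrelay]
    field_simp
  have hρ : ρ ≠ 0 := one_div_ne_zero (Nat.cast_ne_zero.2 (by omega))
  obtain ⟨α, β, hα, hαβ, hsplit, hratio⟩ := exists_weights_sq_add_sq_mul_eq_half hδ
  obtain ⟨a1, a2, b, c2, ha1, ha2, hrelay, hzf, hnoise⟩ :=
    exists_relay_zeroForcing h g hf hP0 hH hG (fun k => inf'_le _ (mem_univ k))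
      (fun k => inf'_le _ (mem_univ k)) σ2 (mul_ne_zero hα.ne' hρ) hαβ
  refine ⟨a1, a2, b, 0, c2, rfl, ha1, ha2, ?_, ?_⟩
  · have hpower : (β / α) ^ 2 * (H / G) * (K * (P0 * G) + σ2) / ‖f‖ ^ 2
        = (K * minSNR + δ) / (1 + √(2 - 2 * δ)) ^ 2 * σ2 / ‖f‖ ^ 2 := by
      rw [hratio, hminSNR, hδHG]
      field_simp
    rw [hrelay, Fintype.card_fin, hpower]
    calc _ ≤ SNRrAP * σ2 / ‖f‖ ^ 2 := by gcongr
      _ = Pr := by simp only [SNRrAP]; field_simp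
  · have hsup : univ.sup' ne (fun k => 1 / ‖h k‖ ^ 2) = 1 / H :=
      sup'_one_div_eq_one_div_inf' ne fun k _ => pow_pos (norm_pos_iff.2 (hh k)) 2
    have hweights : α ^ 2 / H + β ^ 2 / G = 1 / 2 * (1 / H) := by
      rw [← hsplit, hδHG]
      field_simp
    simp only [zero_mul, zero_add, hzf, sub_self, norm_zero, zero_pow two_ne_zero,
      sum_const_zero]
    rw [hnoise, hsup, hweights]
    exact le_of_eq (by ring)

theorem stmt_12 (K : ℕ) (hK : 1 ≤ K) (P0 Pr σ2 : ℝ) (hP0 : 0 < P0) (hPr : 0 < Pr)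
    (hσ : 0 < σ2) (h g : Fin K → ℂ) (hh : ∀ k, h k ≠ 0) (hg : ∀ k, g k ≠ 0)
    (f : ℂ) (hf : f ≠ 0) :
    let ne : (Finset.univ : Finset (Fin K)).Nonempty := Finset.univ_nonempty_iff.mpr ⟨⟨0, hK⟩⟩
    let ρ : ℝ := 1 / K
    let minSNR : ℝ := Finset.univ.inf' ne (fun k => P0 * ‖h k‖ ^ 2 / σ2)
    let minSNRrelay : ℝ := Finset.univ.inf' ne (fun k => P0 * ‖g k‖ ^ 2 / σ2)
    let SNRrAP : ℝ := Pr * ‖f‖ ^ 2 / σ2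
    let δ : ℝ := minSNR / minSNRrelay
    δ ≤ 1 →
    SNRrAP ≥ (K * minSNR + δ) / (1 + Real.sqrt (2 - 2 * δ)) ^ 2 →
    ∃ (a1 a2 : Fin K → ℂ) (b c1 c2 : ℂ),
      c1 = 0 ∧
      (∀ k, ‖a1 k‖ ^ 2 ≤ P0) ∧
      (∀ k, ‖a2 k‖ ^ 2 ≤ P0) ∧
      ‖b‖ ^ 2 * (∑ k, ‖g k‖ ^ 2 * ‖a1 k‖ ^ 2 + σ2) ≤ Pr ∧
      ∑ k, ‖c1 * h k * a1 k + c2 * f * b * g k * a1 k + c2 * h k * a2 k - (ρ : ℂ)‖ ^ 2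
        + (‖c1‖ ^ 2 + ‖c2‖ ^ 2 + ‖c2‖ ^ 2 * ‖f‖ ^ 2 * ‖b‖ ^ 2) * σ2
        ≤ ρ ^ 2 * σ2 / (2 * P0) * Finset.univ.sup' ne (fun k => 1 / ‖h k‖ ^ 2) :=
  stmt_12_general K hK P0 Pr σ2 hP0 hσ h g hh hg f hf
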